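/- arXiv:2504.21127 — 4 statements merged into one kernel-verified Lean document; each statement's English description precedes it below -/
import Mathlib

section
/- For every w ≥ 2 and k ≥ 4, every P_k-free graph G with clique number at most w satisfies χ(G) ≤ (k−2)^{w−1}. -/
/-!
Gyárfás' path argument. Suppose every neighbourhood of a `P_k`-free graph `G` is `m`-colourable.
If `C` is connected with `χ(C) > (j + 1) m` and `v` has a neighbour in `C`, then deleting `N(v)`
from `C` costs at most `m` colours, so some component `C'` of `C \ N(v)` has `χ(C') > j m`; as `C`
is connected, some `u ∈ C ∩ N(v)` has a neighbour in `C'`, and `v` followed by an induced path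
from `u` into `C'` is an induced path. Iterating from a vertex of a component with
`χ > (k - 2) m` yields an induced `P_k`, so `χ(G) ≤ (k - 2) m`; induction on the clique number,
applied to neighbourhoods, gives `χ(G) ≤ (k - 2)^(ω - 1)`.
-/

open SimpleGraph

/-- The chromatic number of the subgraph of `G` induced on `S`, as a natural number. -/
noncomputable def chiSet {V : Type*} (G : SimpleGraph V) (S : Set V) : ℕ :=
  (G.induce S).chromaticNumber.toNat

/-- The chromatic number of `G`, as a natural number. -/
noncomputable def chi {V : Type*} (G : SimpleGraph V) : ℕ :=
  G.chromaticNumber.toNat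

/-- `(A, B)` is an anticomplete pair: no edge of `G` joins `A` and `B`. -/
def Anticomplete {V : Type*} (G : SimpleGraph V) (A B : Set V) : Prop :=
  ∀ a ∈ A, ∀ b ∈ B, ¬ G.Adj a b

/-- `G` is `H`-free: no induced subgraph of `G` is isomorphic to `H`. -/
def FreeOf {V W : Type*} (G : SimpleGraph V) (H : SimpleGraph W) : Prop :=
  IsEmpty (H ↪g G)

theorem FreeOf.induce {V W : Type*} {G : SimpleGraph V} {H : SimpleGraph W} (hG : FreeOf G H)
    (S : Set V) : FreeOf (G.induce S) H :=
  ⟨fun f => hG.false ((Embedding.induce S).comp f)⟩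

namespace SimpleGraph

variable {V : Type*} (G : SimpleGraph V)

/-- Colourings are `ℕ`-valued functions on all of `V`, so colourings of different sets can be
combined without subtypes. -/
def ColorableOn (S : Set V) (n : ℕ) : Prop :=
  ∃ f : V → ℕ, (∀ v ∈ S, f v < n) ∧ ∀ a ∈ S, ∀ b ∈ S, G.Adj a b → f a ≠ f b

def ReachableIn (D : Set V) : V → V → Prop :=
  Relation.ReflTransGen fun a b => a ∈ D ∧ b ∈ D ∧ G.Adj a b

def componentIn (D : Set V) (x : V) : Set V :=
  {y | G.ReachableIn D x y}

def IsConnectedIn (C : Set V) : Prop :=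
  ∀ y ∈ C, ∀ z ∈ C, G.ReachableIn C y z

variable {G}

section ColorableOn

variable {S T : Set V} {n : ℕ}

theorem ColorableOn.mono (hST : S ⊆ T) (h : G.ColorableOn T n) : G.ColorableOn S n :=
  let ⟨f, hf_lt, hf_ne⟩ := h
  ⟨f, fun v hv => hf_lt v (hST hv), fun a ha b hb => hf_ne a (hST ha) b (hST hb)⟩

theorem exists_ne_of_not_colorableOn (hn : 1 ≤ n) (h : ¬ G.ColorableOn S n) (v : V) :
    ∃ y ∈ S, y ≠ v := by
  by_contra! hS
  exact h ⟨fun _ => 0, fun _ _ => hn, fun a ha b hb hab _ =>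
    G.ne_of_adj hab ((hS a ha).trans (hS b hb).symm)⟩

theorem colorableOn_of_diff_of_inter {a b : ℕ} (h₁ : G.ColorableOn (S \ T) a)
    (h₂ : G.ColorableOn (S ∩ T) b) : G.ColorableOn S (a + b) := by
  classical
  obtain ⟨f, hf_lt, hf_ne⟩ := h₁
  obtain ⟨g, hg_lt, hg_ne⟩ := h₂
  refine ⟨fun v => if v ∈ T then a + g v else f v, fun v hv => ?_, fun x hx y hy hxy => ?_⟩ <;>
    dsimp only
  · split_ifs with hvT
    · have := hg_lt v ⟨hv, hvT⟩; omega
    · have := hf_lt v ⟨hv, hvT⟩; omega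
  · split_ifs with hxT hyT hyT
    · have := hg_ne x ⟨hx, hxT⟩ y ⟨hy, hyT⟩ hxy; omega
    · have := hf_lt y ⟨hy, hyT⟩; omega
    · have := hf_lt x ⟨hx, hxT⟩; omega
    · exact hf_ne x ⟨hx, hxT⟩ y ⟨hy, hyT⟩ hxy

theorem ColorableOn.of_colorable_induce (h : (G.induce S).Colorable n) : G.ColorableOn S n := by
  classical
  obtain ⟨c⟩ := h
  refine ⟨fun v => if hv : v ∈ S then (c ⟨v, hv⟩ : ℕ) else 0, fun v hv => by simp [hv],
    fun a ha b hb hab => ?_⟩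
  simpa [ha, hb, Fin.val_inj] using c.valid (show (G.induce S).Adj ⟨a, ha⟩ ⟨b, hb⟩ from hab)

theorem ColorableOn.colorable (h : G.ColorableOn Set.univ n) : G.Colorable n :=
  let ⟨f, hf_lt, hf_ne⟩ := h
  ⟨Coloring.mk (fun v => ⟨f v, hf_lt v trivial⟩) fun hab heq =>
    hf_ne _ trivial _ trivial hab (Fin.val_eq_of_eq heq)⟩

end ColorableOn

section ReachableIn

variable {C D : Set V} {x y z : V}

theorem ReachableIn.symm (h : G.ReachableIn D x y) : G.ReachableIn D y x := by
  induction h with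
  | refl => exact .refl
  | tail _ hbc ih => exact .head ⟨hbc.2.1, hbc.1, hbc.2.2.symm⟩ ih

theorem mem_componentIn_self : x ∈ G.componentIn D x :=
  .refl

theorem componentIn_subset (hx : x ∈ D) : G.componentIn D x ⊆ D := fun _ hy => by
  induction hy with
  | refl => exact hx
  | tail _ hbc => exact hbc.2.1

theorem mem_componentIn_of_adj (hy : y ∈ G.componentIn D x) (hyD : y ∈ D) (hzD : z ∈ D)
    (hyz : G.Adj y z) : z ∈ G.componentIn D x :=
  .tail hy ⟨hyD, hzD, hyz⟩

theorem componentIn_eq_of_adj (hyD : y ∈ D) (hzD : z ∈ D) (hyz : G.Adj y z) :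
    G.componentIn D y = G.componentIn D z :=
  Set.ext fun _ => ⟨.trans (.single ⟨hzD, hyD, hyz.symm⟩), .trans (.single ⟨hyD, hzD, hyz⟩)⟩

theorem ReachableIn.componentIn (h : G.ReachableIn D x y) :
    G.ReachableIn (G.componentIn D x) x y := by
  induction h with
  | refl => exact .refl
  | tail hxb hbc ih => exact .tail ih ⟨hxb, .tail hxb hbc, hbc.2.2⟩

theorem isConnectedIn_componentIn : G.IsConnectedIn (G.componentIn D x) := fun _ hy _ hz =>
  (ReachableIn.componentIn hy).symm.trans (ReachableIn.componentIn hz)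

theorem colorableOn_of_forall_componentIn {n : ℕ}
    (h : ∀ x ∈ D, G.ColorableOn (G.componentIn D x) n) : G.ColorableOn D n := by
  -- one colouring per component, indexed by the set itself, so adjacent vertices share it
  have hF : ∀ S : Set V, ∃ f : V → ℕ, G.ColorableOn S n →
      (∀ v ∈ S, f v < n) ∧ ∀ a ∈ S, ∀ b ∈ S, G.Adj a b → f a ≠ f b := fun S =>
    (em (G.ColorableOn S n)).elim (fun hS => hS.imp fun _ hf _ => hf)
      fun hS => ⟨0, fun h => (hS h).elim⟩
  choose F hF using hF
  refine ⟨fun v => F (G.componentIn D v) v, fun v hv => (hF _ (h v hv)).1 v mem_componentIn_self,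
    fun a ha b hb hab => ?_⟩
  have hab_comp := componentIn_eq_of_adj ha hb hab
  have hb_mem : b ∈ G.componentIn D a := hab_comp ▸ mem_componentIn_self
  simpa only [hab_comp] using (hF _ (h a ha)).2 a mem_componentIn_self b hb_mem hab

theorem exists_componentIn_not_colorableOn {n : ℕ} (h : ¬ G.ColorableOn D n) :
    ∃ x ∈ D, ¬ G.ColorableOn (G.componentIn D x) n := by
  by_contra! h'
  exact h (colorableOn_of_forall_componentIn h')

theorem exists_adj_componentIn (hC : G.IsConnectedIn C) (hDC : D ⊆ C) (hx : x ∈ D) (hy : y ∈ C)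
    (hyx : y ∉ G.componentIn D x) : ∃ u ∈ C \ D, ∃ u' ∈ G.componentIn D x, G.Adj u u' := by
  by_contra! hno
  suffices ∀ z, G.ReachableIn C x z → z ∈ G.componentIn D x from
    hyx (this y (hC x (hDC hx) y hy))
  intro z hz
  induction hz with
  | refl => exact mem_componentIn_self
  | @tail b c _ hbc ih =>
    by_cases hcD : c ∈ D
    · exact mem_componentIn_of_adj ih (componentIn_subset hx ih) hcD hbc.2.2
    · exact (hno c ⟨hbc.2.1, hcD⟩ b ih hbc.2.2.symm).elim

theorem exists_adj_of_isConnectedIn (hC : G.IsConnectedIn C) (hx : x ∈ C) (hy : y ∈ C)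
    (hyx : y ≠ x) : ∃ s ∈ C, G.Adj x s := by
  have hxx : x ∈ ({x} : Set V) := rfl
  obtain ⟨u, hu, u', hu', huu'⟩ := exists_adj_componentIn hC (Set.singleton_subset_iff.2 hx) hxx
    hy fun h => hyx (componentIn_subset hxx h)
  obtain rfl : u' = x := componentIn_subset hxx hu'
  exact ⟨u, hu.1, huu'.symm⟩

end ReachableIn

theorem exists_componentIn_diff_neighborSet {C : Set V} {v s : V} {m n : ℕ}
    (hnbr : G.ColorableOn (G.neighborSet v) m) (hC : G.IsConnectedIn C) (hs : s ∈ C)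
    (hvs : G.Adj v s) (hcol : ¬ G.ColorableOn C (n + m)) :
    ∃ C' ⊆ C \ G.neighborSet v, G.IsConnectedIn C' ∧ ¬ G.ColorableOn C' n ∧
      ∃ u ∈ C, G.Adj v u ∧ ∃ u' ∈ C', G.Adj u u' := by
  have hD : ¬ G.ColorableOn (C \ G.neighborSet v) n := fun hD =>
    hcol (colorableOn_of_diff_of_inter hD (hnbr.mono Set.inter_subset_right))
  obtain ⟨x, hx, hC'⟩ := exists_componentIn_not_colorableOn hD
  have hs_notMem : s ∉ G.componentIn (C \ G.neighborSet v) x := fun h =>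
    (componentIn_subset hx h).2 hvs
  obtain ⟨u, ⟨huC, hu_notMem⟩, u', hu', huu'⟩ :=
    exists_adj_componentIn hC Set.sdiff_subset hx hs hs_notMem
  have hvu : G.Adj v u := by_contra fun h => hu_notMem ⟨huC, h⟩
  exact ⟨_, componentIn_subset hx, isConnectedIn_componentIn, hC', u, huC, hvu, u', hu', huu'⟩

theorem exists_pathGraph_one_embedding (c : V) : ∃ f : pathGraph 1 ↪g G, f 0 = c :=
  ⟨⟨⟨fun _ => c, fun a b _ => Subsingleton.elim a b⟩, fun {a b} => by
    simp [Subsingleton.elim a b]⟩, rfl⟩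

theorem exists_pathGraph_cons {n : ℕ} (f : pathGraph (n + 1) ↪g G) {v : V} {C : Set V}
    (hfC : ∀ i : Fin n, f i.succ ∈ C) (hv : G.Adj v (f 0)) (hvC : v ∉ C)
    (hCv : ∀ c ∈ C, ¬ G.Adj v c) :
    ∃ g : pathGraph (n + 2) ↪g G, g 0 = v ∧ ∀ i : Fin (n + 1), g i.succ = f i := by
  have hadj : ∀ i, G.Adj v (f i) ↔ i = 0 := by
    intro i
    cases i using Fin.cases with
    | zero => simpa using hv
    | succ i => simpa [Fin.succ_ne_zero] using hCv _ (hfC i)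
  have hinj : Function.Injective (Fin.cons v f : Fin (n + 2) → V) := by
    refine Fin.cons_injective_iff.2 ⟨?_, f.injective⟩
    rintro ⟨i, hi⟩
    cases i using Fin.cases with
    | zero => exact G.irrefl (hi ▸ hv)
    | succ i => exact hvC (hi ▸ hfC i)
  refine ⟨⟨⟨Fin.cons v f, hinj⟩, fun {a b} => ?_⟩, rfl, fun i => rfl⟩
  simp only [Function.Embedding.coeFn_mk, pathGraph_adj]
  cases a using Fin.cases with
  | zero =>
    cases b using Fin.cases with
    | zero => simp
    | succ b =>
      simp only [Fin.cons_zero, Fin.cons_succ, hadj, Fin.ext_iff, Fin.val_succ, Fin.val_zero]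
      omega
  | succ a =>
    cases b using Fin.cases with
    | zero =>
      simp only [Fin.cons_zero, Fin.cons_succ, G.adj_comm _ v, hadj, Fin.ext_iff, Fin.val_succ,
        Fin.val_zero]
      omega
    | succ b => simp [pathGraph_adj]

theorem exists_pathGraph_embedding_of_not_colorableOn {m : ℕ}
    (hnbr : ∀ v, G.ColorableOn (G.neighborSet v) m) (j : ℕ) {v : V} {C : Set V}
    (hC : G.IsConnectedIn C) (hvC : v ∉ C) (hv : ∃ c ∈ C, G.Adj v c)
    (hcol : ¬ G.ColorableOn C (j * m)) :
    ∃ f : pathGraph (j + 2) ↪g G, f 0 = v ∧ ∀ i : Fin (j + 1), f i.succ ∈ C := by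
  induction j generalizing v C with
  | zero =>
    obtain ⟨c, hc, hvc⟩ := hv
    obtain ⟨f, hf0⟩ := exists_pathGraph_one_embedding (G := G) c
    obtain ⟨g, hg0, hg⟩ := exists_pathGraph_cons f (C := ∅) Fin.elim0 (hf0 ▸ hvc)
      (Set.notMem_empty v) fun _ h => h.elim
    refine ⟨g, hg0, fun i => ?_⟩
    rwa [Fin.fin_one_eq_zero i, hg, hf0]
  | succ j ih =>
    obtain ⟨s, hs, hvs⟩ := hv
    obtain ⟨C', hC'C, hC', hC'col, u, huC, hvu, u', hu', huu'⟩ :=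
      exists_componentIn_diff_neighborSet (hnbr v) hC hs hvs (by rwa [add_one_mul] at hcol)
    obtain ⟨f, hf0, hfC'⟩ :=
      ih hC' (fun hu => (hC'C hu).2 hvu) ⟨u', hu', huu'⟩ hC'col
    obtain ⟨g, hg0, hg⟩ := exists_pathGraph_cons f hfC' (hf0 ▸ hvu)
      (fun hvC' => hvC (hC'C hvC').1) fun _ hc => (hC'C hc).2
    refine ⟨g, hg0, fun i => ?_⟩
    rw [hg]
    cases i using Fin.cases with
    | zero => rwa [hf0]
    | succ i => exact (hC'C (hfC' i)).1

theorem colorableOn_univ_of_pathFree {k m : ℕ} (hk : 4 ≤ k) (hm : 1 ≤ m)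
    (hG : FreeOf G (pathGraph k)) (hnbr : ∀ v, G.ColorableOn (G.neighborSet v) m) :
    G.ColorableOn Set.univ ((k - 2) * m) := by
  obtain ⟨j, rfl⟩ : ∃ j, k = j + 4 := ⟨k - 4, by omega⟩
  by_contra hcol
  obtain ⟨v, -, hC₀col⟩ := exists_componentIn_not_colorableOn hcol
  have hC₀ : G.IsConnectedIn (G.componentIn Set.univ v) := isConnectedIn_componentIn
  obtain ⟨y, hy, hyv⟩ := exists_ne_of_not_colorableOn (Nat.mul_pos (by omega) hm) hC₀col v
  obtain ⟨s, hs, hvs⟩ := exists_adj_of_isConnectedIn hC₀ mem_componentIn_self hy hyv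
  obtain ⟨C₁, hC₁C₀, hC₁, hC₁col, u, -, hvu, u', hu', huu'⟩ :=
    exists_componentIn_diff_neighborSet (n := (j + 1) * m) (hnbr v) hC₀ hs hvs
      (by rwa [show (j + 1) * m + m = (j + 4 - 2) * m by rw [← add_one_mul]; rfl])
  have hvC₁ : v ∉ C₁ := fun hv => by
    obtain ⟨y, hy, hyv⟩ := exists_ne_of_not_colorableOn (Nat.mul_pos (by omega) hm) hC₁col v
    obtain ⟨s, hs, hvs⟩ := exists_adj_of_isConnectedIn hC₁ hv hy hyv
    exact (hC₁C₀ hs).2 hvs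
  obtain ⟨f, hf0, hfC₁⟩ := exists_pathGraph_embedding_of_not_colorableOn hnbr (j + 1) hC₁
    (fun hu => (hC₁C₀ hu).2 hvu) ⟨u', hu', huu'⟩ hC₁col
  obtain ⟨g, -⟩ := exists_pathGraph_cons f hfC₁ (hf0 ▸ hvu) hvC₁ fun _ hc => (hC₁C₀ hc).2
  exact hG.false g

theorem colorable_pow_of_pathFree {k : ℕ} (hk : 4 ≤ k) (hG : FreeOf G (pathGraph k)) (a : ℕ)
    (hclique : G.CliqueFree (a + 2)) : G.Colorable ((k - 2) ^ a) := by
  induction a generalizing V with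
  | zero => simpa [colorable_one_iff] using cliqueFree_two.1 hclique
  | succ a ih =>
    have hnbr : ∀ v, G.ColorableOn (G.neighborSet v) ((k - 2) ^ a) := fun v =>
      .of_colorable_induce <| ih (hG.induce _) <| (cliqueFree_induce_iff _ _ _).2 <| by
        simpa using CliqueFreeOn.of_succ G hclique.cliqueFreeOn (Set.mem_univ v)
    rw [pow_succ']
    exact (colorableOn_univ_of_pathFree hk (Nat.one_le_pow _ _ (by omega)) hG hnbr).colorable

end SimpleGraph

theorem stmt_5_general {V : Type*} (w k : ℕ) (hw : 2 ≤ w) (hk : 4 ≤ k)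
    (G : SimpleGraph V) (hG : FreeOf G (pathGraph k))
    (hclique : G.CliqueFree (w + 1)) :
    chi G ≤ (k - 2) ^ (w - 1) := by
  have hcol : G.Colorable ((k - 2) ^ (w - 1)) :=
    colorable_pow_of_pathFree hk hG (w - 1) (by rwa [show w - 1 + 2 = w + 1 by omega])
  exact ENat.toNat_le_of_le_natCast hcol.chromaticNumber_le

/-- For every `w ≥ 2` and `k ≥ 4`, every `P_k`-free graph `G` with clique
number at most `w` satisfies `χ(G) ≤ (k − 2)^(w − 1)`. -/
theorem stmt_5 {V : Type*} [Fintype V] (w k : ℕ) (hw : 2 ≤ w) (hk : 4 ≤ k)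
    (G : SimpleGraph V) (hG : FreeOf G (pathGraph k))
    (hclique : G.CliqueFree (w + 1)) :
    chi G ≤ (k - 2) ^ (w - 1) :=
  stmt_5_general w k hw hk G hG hclique
end

section
/- Let ε ∈ (0, 1/2], let H be a graph with vertex set {g_1,…,g_h}, h ≥ 2, let G be a graph, A_1,…,A_h ⊆ V(G) nonempty and disjoint, and μ a submeasure on G. Then either (a) there is a copy φ of H in G with φ(g_i) ∈ A_i for all i ∈ [h]; or (b) there exist indices i < j in [h] and sets D_i ⊆ A_i, D_j ⊆ A_j with μ(D_i) ≥ ε^{h−2}·μ(A_i) and μ(D_j) ≥ ε^{h−2}·μ(A_j) such that either μ(D_j ∩ N_G(v)) < ε·μ(D_j) for all v ∈ D_i, or μ(D_j \ N_G(v)) < ε·μ(D_j) for all v ∈ D_i. -/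
open SimpleGraph

/-- A submeasure on the vertex set: zero on `∅`, one on singletons, monotone, subadditive. -/
structure IsSubmeasure {V : Type*} (μ : Set V → ℝ) : Prop where
  empty : μ ∅ = 0
  single : ∀ v : V, μ {v} = 1
  mono : ∀ ⦃X Y : Set V⦄, X ⊆ Y → μ X ≤ μ Y
  subadd : ∀ A B : Set V, μ (A ∪ B) ≤ μ A + μ B

/-!
Embed `g₁, g₂, …` one at a time. With current candidate sets `A₁, …, A_h`, call `v ∈ A₁` bad
for `j` if fewer than an `ε`-fraction (in `μ`) of `A_j` is adjacent to `v` as `g_j` is to `g₁`.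
If the bad vertices for some `j` fill an `ε^{h-2}`-fraction of `A₁`, they and `A_j` form the
sparse or dense pair. Otherwise, since `(h-1) ε^{h-2} ≤ (h-1) 2^{2-h} ≤ 1`, subadditivity leaves
a vertex `v ∈ A₁` bad for no `j`; map `g₁` to `v`, shrink each `A_j` to the vertices that agree
with `H` at `v` (losing a factor `ε` of measure), and recurse on `g₂, …, g_h`.
-/

namespace IsSubmeasure

variable {V : Type*} {μ : Set V → ℝ}

lemma nonneg (hμ : IsSubmeasure μ) (X : Set V) : 0 ≤ μ X := by
  simpa [hμ.empty] using hμ.mono (Set.empty_subset X)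

lemma one_le_of_nonempty (hμ : IsSubmeasure μ) {X : Set V} (hX : X.Nonempty) : 1 ≤ μ X := by
  obtain ⟨v, hv⟩ := hX
  simpa [hμ.single] using hμ.mono (Set.singleton_subset_iff.mpr hv)

lemma nonempty_of_pos (hμ : IsSubmeasure μ) {X : Set V} (hX : 0 < μ X) : X.Nonempty := by
  rw [Set.nonempty_iff_ne_empty]
  rintro rfl
  exact hX.ne' hμ.empty

lemma iUnion_le_sum (hμ : IsSubmeasure μ) {ι : Type*} [Fintype ι] (T : ι → Set V) :
    μ (⋃ i, T i) ≤ ∑ i, μ (T i) := by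
  classical
  suffices ∀ s : Finset ι, μ (⋃ i ∈ s, T i) ≤ ∑ i ∈ s, μ (T i) by simpa using this Finset.univ
  intro s
  induction s using Finset.induction with
  | empty => simp [hμ.empty]
  | insert a s ha ih =>
    rw [Finset.set_biUnion_insert, Finset.sum_insert ha]
    exact (hμ.subadd _ _).trans (by linarith)

lemma exists_mem_forall_notMem (hμ : IsSubmeasure μ) {ι : Type*} [Fintype ι] {S : Set V}
    {T : ι → Set V} {c : ℝ} (hS : S.Nonempty) (hT : ∀ i, μ (T i) < c)
    (hc : Fintype.card ι * c ≤ μ S) : ∃ v ∈ S, ∀ i, v ∉ T i := by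
  by_contra! hcover
  obtain ⟨v, hv⟩ := hS
  obtain ⟨i₀, -⟩ := hcover v hv
  have hsub : S ⊆ ⋃ i, T i := fun w hw => Set.mem_iUnion.mpr (hcover w hw)
  have : ∑ i, μ (T i) < ∑ _i : ι, c :=
    Finset.sum_lt_sum_of_nonempty ⟨i₀, Finset.mem_univ _⟩ fun i _ => hT i
  simp only [Finset.sum_const, Finset.card_univ, nsmul_eq_mul] at this
  linarith [hμ.mono hsub, hμ.iUnion_le_sum T]

end IsSubmeasure

lemma nat_mul_pow_pred_le_one {ε : ℝ} (hε0 : 0 ≤ ε) (hε : ε ≤ 1 / 2) (n : ℕ) :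
    n * ε ^ (n - 1) ≤ 1 := by
  have hn : (n : ℝ) ≤ 2 ^ (n - 1) := by
    have := (n - 1).lt_two_pow_self
    exact_mod_cast (by omega : n ≤ 2 ^ (n - 1))
  calc (n : ℝ) * ε ^ (n - 1) ≤ 2 ^ (n - 1) * (1 / 2) ^ (n - 1) := by gcongr
    _ = 1 := by rw [← mul_pow]; norm_num

section

variable {V : Type*} (G : SimpleGraph V)

/-- Unlike a copy, `φ` need not be injective; it is whenever the `A i` are pairwise disjoint. -/
def CopyIn {n : ℕ} (H : SimpleGraph (Fin n)) (A : Fin n → Set V) : Prop :=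
  ∃ φ : Fin n → V, (∀ u v, H.Adj u v ↔ G.Adj (φ u) (φ v)) ∧ ∀ i, φ i ∈ A i

def SparseOrDense (μ : Set V → ℝ) (ε : ℝ) (Di Dj : Set V) : Prop :=
  (∀ v ∈ Di, μ (Dj ∩ G.neighborSet v) < ε * μ Dj) ∨
    (∀ v ∈ Di, μ (Dj \ G.neighborSet v) < ε * μ Dj)

def HasSparseOrDensePair {n : ℕ} (μ : Set V → ℝ) (ε δ : ℝ) (A : Fin n → Set V) : Prop :=
  ∃ i j : Fin n, i < j ∧ ∃ Di Dj : Set V, Di ⊆ A i ∧ Dj ⊆ A j ∧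
    δ * μ (A i) ≤ μ Di ∧ δ * μ (A j) ≤ μ Dj ∧ SparseOrDense G μ ε Di Dj

def agreeingPart (v : V) (p : Prop) (X : Set V) : Set V :=
  {w ∈ X | p ↔ G.Adj v w}

variable {G}

lemma sparseOrDense_of_agreeingPart_lt {μ : Set V → ℝ} {ε : ℝ} {p : Prop} {D X : Set V}
    (h : ∀ v ∈ D, μ (agreeingPart G v p X) < ε * μ X) : SparseOrDense G μ ε D X := by
  by_cases hp : p
  · exact .inl fun v hv => by convert h v hv using 2; ext; simp [agreeingPart, hp]
  · exact .inr fun v hv => by convert h v hv using 2; ext; simp [agreeingPart, hp]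

lemma injective_of_mem_of_pairwise_disjoint {ι : Type*} {A : ι → Set V}
    (hdisj : ∀ i j, i ≠ j → Disjoint (A i) (A j)) {φ : ι → V} (hφ : ∀ i, φ i ∈ A i) :
    Function.Injective φ := by
  intro i j hij
  by_contra hne
  exact Set.disjoint_left.mp (hdisj i j hne) (hφ i) (hij ▸ hφ j)

lemma copyIn_of_cons {n : ℕ} {H : SimpleGraph (Fin (n + 1))} {A : Fin (n + 1) → Set V}
    {v : V} (hv : v ∈ A 0)
    (h : CopyIn G (H.comap Fin.succ) fun j => agreeingPart G v (H.Adj 0 j.succ) (A j.succ)) :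
    CopyIn G H A := by
  obtain ⟨φ, hadj, hmem⟩ := h
  refine ⟨Fin.cons v φ, fun a b => ?_, fun i => ?_⟩
  · cases a using Fin.cases <;> cases b using Fin.cases
    · simp
    · simpa using (hmem _).2
    · simpa [H.adj_comm, G.adj_comm] using (hmem _).2
    · simpa using hadj _ _
  · cases i using Fin.cases
    · exact hv
    · exact (hmem _).1

lemma hasSparseOrDensePair_of_succ {μ : Set V → ℝ} {ε : ℝ} (hε0 : 0 ≤ ε) {n : ℕ}
    {A : Fin (n + 1) → Set V} {B : Fin n → Set V} (hBA : ∀ j, B j ⊆ A j.succ)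
    (hμB : ∀ j, ε * μ (A j.succ) ≤ μ (B j))
    (h : HasSparseOrDensePair G μ ε (ε ^ (n - 2)) B) :
    HasSparseOrDensePair G μ ε (ε ^ (n + 1 - 2)) A := by
  obtain ⟨i, j, hij, Di, Dj, hDi, hDj, hμi, hμj, hpair⟩ := h
  have hn : 2 ≤ n := by have := j.isLt; have := Fin.lt_def.mp hij; omega
  have hpow : ε ^ (n + 1 - 2) = ε ^ (n - 2) * ε := by
    rw [show n + 1 - 2 = n - 2 + 1 by omega, pow_succ]
  have hscale : ∀ k, ε ^ (n + 1 - 2) * μ (A k.succ) ≤ ε ^ (n - 2) * μ (B k) := fun k => by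
    rw [hpow, mul_assoc]
    exact mul_le_mul_of_nonneg_left (hμB k) (pow_nonneg hε0 _)
  exact ⟨i.succ, j.succ, Fin.succ_lt_succ_iff.mpr hij, Di, Dj, hDi.trans (hBA i),
    hDj.trans (hBA j), (hscale i).trans hμi, (hscale j).trans hμj, hpair⟩

theorem copyIn_or_hasSparseOrDensePair {μ : Set V → ℝ} (hμ : IsSubmeasure μ) {ε : ℝ}
    (hε0 : 0 < ε) (hε : ε ≤ 1 / 2) :
    ∀ {n : ℕ} (H : SimpleGraph (Fin n)) (A : Fin n → Set V), (∀ i, (A i).Nonempty) →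
      CopyIn G H A ∨ HasSparseOrDensePair G μ ε (ε ^ (n - 2)) A
  | 0, _, _, _ => .inl ⟨finZeroElim, fun u => u.elim0, fun i => i.elim0⟩
  | n + 1, H, A, hA => by
    set bad : Fin n → Set V := fun j =>
      {v ∈ A 0 | μ (agreeingPart G v (H.Adj 0 j.succ) (A j.succ)) < ε * μ (A j.succ)}
    by_cases hlarge : ∃ j, ε ^ (n + 1 - 2) * μ (A 0) ≤ μ (bad j)
    · obtain ⟨j, hj⟩ := hlarge
      refine .inr ⟨0, j.succ, Fin.succ_pos j, bad j, A j.succ, Set.sep_subset _ _, le_rfl, hj,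
        mul_le_of_le_one_left (hμ.nonneg _) (pow_le_one₀ hε0.le (by linarith)),
        sparseOrDense_of_agreeingPart_lt fun v hv => hv.2⟩
    push Not at hlarge
    have hcount : Fintype.card (Fin n) * (ε ^ (n + 1 - 2) * μ (A 0)) ≤ μ (A 0) := by
      rw [Fintype.card_fin, ← mul_assoc, show n + 1 - 2 = n - 1 by omega]
      exact mul_le_of_le_one_left (hμ.nonneg _) (nat_mul_pow_pred_le_one hε0.le hε n)
    obtain ⟨v, hv, hgood⟩ := hμ.exists_mem_forall_notMem (hA 0) hlarge hcount
    set B : Fin n → Set V := fun j => agreeingPart G v (H.Adj 0 j.succ) (A j.succ)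
    have hμB : ∀ j, ε * μ (A j.succ) ≤ μ (B j) := fun j => not_lt.mp fun hlt => hgood j ⟨hv, hlt⟩
    have hB : ∀ j, (B j).Nonempty := fun j => hμ.nonempty_of_pos <|
      (mul_pos hε0 (one_pos.trans_le (hμ.one_le_of_nonempty (hA j.succ)))).trans_le (hμB j)
    rcases copyIn_or_hasSparseOrDensePair hμ hε0 hε (H.comap Fin.succ) B hB with hcopy | hpair
    · exact .inl (copyIn_of_cons hv hcopy)
    · exact .inr (hasSparseOrDensePair_of_succ hε0.le (fun j => Set.sep_subset _ _) hμB hpair)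

end

theorem stmt_9_general {V : Type*} (ε : ℝ) (hε0 : 0 < ε) (hε : ε ≤ 1 / 2)
    (h : ℕ) (H : SimpleGraph (Fin h)) (G : SimpleGraph V)
    (A : Fin h → Set V) (hA : ∀ i, (A i).Nonempty)
    (hdisj : ∀ i j, i ≠ j → Disjoint (A i) (A j))
    (μ : Set V → ℝ) (hμ : IsSubmeasure μ) :
    (∃ φ : Fin h → V, Function.Injective φ ∧
        (∀ u v : Fin h, H.Adj u v ↔ G.Adj (φ u) (φ v)) ∧ ∀ i, φ i ∈ A i) ∨
      (∃ i j : Fin h, i < j ∧ ∃ Di Dj : Set V, Di ⊆ A i ∧ Dj ⊆ A j ∧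
        ε ^ (h - 2) * μ (A i) ≤ μ Di ∧ ε ^ (h - 2) * μ (A j) ≤ μ Dj ∧
        ((∀ v ∈ Di, μ (Dj ∩ G.neighborSet v) < ε * μ Dj) ∨
          (∀ v ∈ Di, μ (Dj \ G.neighborSet v) < ε * μ Dj))) := by
  rcases copyIn_or_hasSparseOrDensePair hμ hε0 hε H A hA with ⟨φ, hadj, hmem⟩ | hpair
  · exact .inl ⟨φ, injective_of_mem_of_pairwise_disjoint hdisj hmem, hadj, hmem⟩
  · exact .inr hpair

/-- Erdős–Hajnal iteration lemma: For `ε ∈ (0, 1/2]`, a graph `H` on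
`{g₁, …, g_h}` with `h ≥ 2`, nonempty disjoint `A₁, …, A_h ⊆ V(G)`, and a submeasure
`μ` on `G`: either there is a copy `φ` of `H` in `G` with `φ(gᵢ) ∈ Aᵢ` for all `i`, or
there are `i < j` and `Dᵢ ⊆ Aᵢ`, `D_j ⊆ A_j` with `μ(Dᵢ) ≥ ε^{h−2}·μ(Aᵢ)`,
`μ(D_j) ≥ ε^{h−2}·μ(A_j)`, such that `Dᵢ` is `ε`-sparse or `(1−ε)`-dense to `D_j`. -/
theorem stmt_9 {V : Type*} (ε : ℝ) (hε0 : 0 < ε) (hε : ε ≤ 1 / 2)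
    (h : ℕ) (hh : 2 ≤ h) (H : SimpleGraph (Fin h)) (G : SimpleGraph V)
    (A : Fin h → Set V) (hA : ∀ i, (A i).Nonempty)
    (hdisj : ∀ i j, i ≠ j → Disjoint (A i) (A j))
    (μ : Set V → ℝ) (hμ : IsSubmeasure μ) :
    (∃ φ : Fin h → V, Function.Injective φ ∧
        (∀ u v : Fin h, H.Adj u v ↔ G.Adj (φ u) (φ v)) ∧ ∀ i, φ i ∈ A i) ∨
      (∃ i j : Fin h, i < j ∧ ∃ Di Dj : Set V, Di ⊆ A i ∧ Dj ⊆ A j ∧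
        ε ^ (h - 2) * μ (A i) ≤ μ Di ∧ ε ^ (h - 2) * μ (A j) ≤ μ Dj ∧
        ((∀ v ∈ Di, μ (Dj ∩ G.neighborSet v) < ε * μ Dj) ∨
          (∀ v ∈ Di, μ (Dj \ G.neighborSet v) < ε * μ Dj))) :=
  stmt_9_general ε hε0 hε h H G A hA hdisj μ hμ
end

section
/- Suppose there exist b ≥ 4 and, for every P5-free graph G with clique number w ≥ 2 and χ(G) ≥ 2, a complete pair (A,B) in G with χ(A) ≥ w^{-b}·χ(G) and χ(B) ≥ 2^{-b}·χ(G). Then there exists d ≥ 1 (one may take d = 2b) such that every P5-free graph G with clique number at most w ≥ 3 has χ(G) ≤ w^{d·log w / log log w}, where log is the binary logarithm. -/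
open SimpleGraph

/-
Apply the complete-pair hypothesis repeatedly, each time inside the second part `B` of the
previous pair. The first parts form a complete blockade, so their clique numbers add up to at
most `w`: within `k` rounds either `χ` has dropped to at most `2^{bk}`, or some first part `A` has
clique number at most `w / k` while `χ(G) ≤ w^b 2^{bk} χ(A)`. Induction on the clique number gives
`χ(G) ≤ (w^b 2^{bk})^{(number of base-k digits of w)}`, and the choice `k = ⌊log w⌋ + 1`, for which
`2^k ≤ 2w`, turns this into `χ(G) ≤ w^{6b log w / log log w}`.
-/

section Coloring

variable {V W : Type*} {G : SimpleGraph V} {H : SimpleGraph W}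

lemma chiSet_univ (G : SimpleGraph V) : chiSet G Set.univ = chi G :=
  congrArg ENat.toNat (chromaticNumber_congr (induceUnivIso G))

lemma chi_le_one_of_cliqueFree_two (h : G.CliqueFree 2) : chi G ≤ 1 := by
  rw [cliqueFree_two] at h
  subst h
  exact ENat.toNat_le_of_le_natCast
    (Colorable.chromaticNumber_le ⟨Coloring.mk (fun _ => 0) (by simp)⟩)

lemma chiSet_le_one_of_cliqueFreeOn_two {S : Set V} (h : G.CliqueFreeOn S 2) : chiSet G S ≤ 1 :=
  chi_le_one_of_cliqueFree_two ((G.cliqueFree_induce_iff S 2).2 h)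

lemma SimpleGraph.Embedding.chiSet_image (f : H ↪g G) (A : Set W) :
    chiSet G (f '' A) = chiSet H A := by
  have hrange : Set.range (f.comp (Embedding.induce A)) = f '' A := by ext; simp
  unfold chiSet
  rw [chromaticNumber_congr (f.comp (Embedding.induce A)).isoInduceRange, hrange]

lemma SimpleGraph.Embedding.chi_eq_chiSet_range (f : H ↪g G) :
    chi H = chiSet G (Set.range f) := by
  rw [← Set.image_univ, f.chiSet_image, chiSet_univ]

lemma SimpleGraph.Embedding.cliqueFree_of_cliqueFreeOn_range (f : H ↪g G) {n : ℕ}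
    (h : G.CliqueFreeOn (Set.range f) n) : H.CliqueFree n :=
  ((G.cliqueFree_induce_iff _ n).2 h).comap f.isoInduceRange.isContained

lemma FreeOf.of_embedding {X : Type*} {P : SimpleGraph X} (hG : FreeOf G P) (f : H ↪g G) :
    FreeOf H P :=
  ⟨fun e => hG.false (f.comp e)⟩

lemma SimpleGraph.cliqueFree_cliqueNum_succ [Finite V] (G : SimpleGraph V) :
    G.CliqueFree (G.cliqueNum + 1) := fun t ht => by
  have := IsClique.card_le_cliqueNum (tc := ht.isClique)
  rw [ht.card_eq] at this
  omega

lemma SimpleGraph.IsNClique.union [DecidableEq V] {m n : ℕ} {s t : Finset V}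
    (hs : G.IsNClique m s) (ht : G.IsNClique n t) (hst : ∀ a ∈ s, ∀ c ∈ t, G.Adj a c) :
    G.IsNClique (m + n) (s ∪ t) := by
  refine ⟨?_, ?_⟩
  · rw [Finset.coe_union, IsClique, Set.pairwise_union]
    exact ⟨hs.isClique, ht.isClique, fun a ha c hc _ => ⟨hst a ha c hc, (hst a ha c hc).symm⟩⟩
  · rw [Finset.card_union_of_disjoint, hs.card_eq, ht.card_eq]
    exact Finset.disjoint_left.2 fun a has hat => G.irrefl (hst a has a hat)

end Coloring

def HasCompletePairs (b : ℕ) : Prop :=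
  ∀ (n : ℕ) (G : SimpleGraph (Fin n)) (w : ℕ), 2 ≤ w →
    ¬ G.CliqueFree w → G.CliqueFree (w + 1) → FreeOf G (pathGraph 5) →
    2 ≤ chi G →
    ∃ A B : Set (Fin n), Disjoint A B ∧ (∀ a ∈ A, ∀ c ∈ B, G.Adj a c) ∧
      (chi G : ℝ) ≤ (w : ℝ) ^ b * chiSet G A ∧
      (chi G : ℝ) ≤ 2 ^ b * chiSet G B

namespace HasCompletePairs

variable {b : ℕ} (h : HasCompletePairs b) {V : Type*} [Finite V] {G : SimpleGraph V}
  (hG : FreeOf G (pathGraph 5))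
include h hG

theorem exists_complete_subsets {S : Set V} {w : ℕ} (hS : G.CliqueFreeOn S (w + 1))
    (hχ : 2 ≤ chiSet G S) :
    ∃ A ⊆ S, ∃ B ⊆ S, (∀ a ∈ A, ∀ c ∈ B, G.Adj a c) ∧
      chiSet G S ≤ w ^ b * chiSet G A ∧ chiSet G S ≤ 2 ^ b * chiSet G B := by
  obtain ⟨n, φ, hφ⟩ : ∃ n, ∃ φ : Fin n ↪ V, Set.range φ = S := by
    have : Fintype S := Fintype.ofFinite S
    refine ⟨_, (Fintype.equivFin S).symm.toEmbedding.trans (Function.Embedding.subtype _), ?_⟩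
    ext v
    exact ⟨fun ⟨x, hx⟩ => hx ▸ ((Fintype.equivFin S).symm x).2,
      fun hv => ⟨Fintype.equivFin S ⟨v, hv⟩, by simp⟩⟩
  let H := G.comap φ
  let f : H ↪g G := Embedding.comap φ G
  replace hφ : Set.range f = S := hφ
  subst hφ
  have hχH : 2 ≤ chi H := by rwa [f.chi_eq_chiSet_range]
  have hcf : H.CliqueFree (w + 1) := f.cliqueFree_of_cliqueFreeOn_range hS
  obtain ⟨s, hs⟩ := H.exists_isNClique_cliqueNum
  have hω₂ : 2 ≤ H.cliqueNum := by
    by_contra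
    have := chi_le_one_of_cliqueFree_two (H.cliqueFree_cliqueNum_succ.mono (by omega))
    omega
  have hωw : H.cliqueNum ≤ w := by
    by_contra
    exact hcf.mono (by omega) s hs
  obtain ⟨A, B, -, hAB, hA, hB⟩ := h _ H _ hω₂ (fun hcf' => hcf' s hs)
    H.cliqueFree_cliqueNum_succ (hG.of_embedding f) hχH
  rw [← f.chi_eq_chiSet_range]
  refine ⟨f '' A, Set.image_subset_range _ _, f '' B, Set.image_subset_range _ _, ?_, ?_, ?_⟩
  · rintro _ ⟨a, ha, rfl⟩ _ ⟨c, hc, rfl⟩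
    exact f.map_adj_iff.2 (hAB a ha c hc)
  · rw [f.chiSet_image]
    calc chi H ≤ H.cliqueNum ^ b * chiSet H A := by exact_mod_cast hA
      _ ≤ w ^ b * chiSet H A := by gcongr
  · rw [f.chiSet_image]
    exact_mod_cast hB

theorem exists_cliqueFreeOn_subset {S : Set V} {w : ℕ} (hS : G.CliqueFreeOn S (w + 1))
    (m k : ℕ) (hSk : G.CliqueFreeOn S (k * (m + 1))) :
    chiSet G S ≤ 2 ^ (b * k) ∨
      ∃ A ⊆ S, G.CliqueFreeOn A (m + 1) ∧ chiSet G S ≤ w ^ b * 2 ^ (b * k) * chiSet G A := by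
  classical
  induction k generalizing S with
  | zero => exact absurd (hSk (t := ∅) (by simp)) (by simp)
  | succ k ih =>
    by_cases hχ : chiSet G S ≤ 1
    · exact .inl (hχ.trans Nat.one_le_two_pow)
    obtain ⟨A, hAS, B, hBS, hAB, hA, hB⟩ := h.exists_complete_subsets hG hS (by omega)
    by_cases hAm : G.CliqueFreeOn A (m + 1)
    · refine .inr ⟨A, hAS, hAm, hA.trans ?_⟩
      rw [mul_assoc]
      exact Nat.mul_le_mul_left _ (Nat.le_mul_of_pos_left _ (by positivity))
    -- an `(m + 1)`-clique in `A` extends every clique in `B`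
    have hBk : G.CliqueFreeOn B (k * (m + 1)) := by
      intro u huB hu
      obtain ⟨t, htA, ht⟩ : ∃ t : Finset V, ↑t ⊆ A ∧ G.IsNClique (m + 1) t := by
        simpa [CliqueFreeOn] using hAm
      refine hSk (t := t ∪ u) ?_ ?_
      · push_cast
        exact Set.union_subset (htA.trans hAS) (huB.trans hBS)
      · convert ht.union hu (fun a ha c hc => hAB a (htA ha) c (huB hc)) using 1
        ring
    have hpow : 2 ^ (b * (k + 1)) = 2 ^ b * 2 ^ (b * k) := by ring
    rcases ih (CliqueFreeOn.subset G hBS hS) hBk with hle | ⟨A', hA'B, hA', hχA'⟩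
    · left
      calc chiSet G S ≤ 2 ^ b * chiSet G B := hB
        _ ≤ 2 ^ b * 2 ^ (b * k) := by gcongr
        _ = 2 ^ (b * (k + 1)) := hpow.symm
    · refine .inr ⟨A', hA'B.trans hBS, hA', ?_⟩
      calc chiSet G S ≤ 2 ^ b * chiSet G B := hB
        _ ≤ 2 ^ b * (w ^ b * 2 ^ (b * k) * chiSet G A') := by gcongr
        _ = w ^ b * 2 ^ (b * (k + 1)) * chiSet G A' := by ring

theorem chiSet_le_pow_length_digits {k w : ℕ} (hk : 2 ≤ k) {n : ℕ} (hn : n ≤ w) {S : Set V}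
    (hS : G.CliqueFreeOn S (n + 1)) :
    chiSet G S ≤ (w ^ b * 2 ^ (b * k)) ^ (k.digits n).length := by
  induction n using Nat.strong_induction_on generalizing S with
  | _ n ih =>
  rcases Nat.eq_zero_or_pos n with rfl | hn₀
  · simpa using chiSet_le_one_of_cliqueFreeOn_two (CliqueFreeOn.mono G (by norm_num) hS)
  have hw₀ : w ≠ 0 := by omega
  have hM : 1 ≤ w ^ b * 2 ^ (b * k) := Nat.one_le_iff_ne_zero.2 (by positivity)
  have hlen : (k.digits n).length = (k.digits (n / k)).length + 1 := by
    rw [Nat.digits_def' hk hn₀, List.length_cons]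
  have hSk : G.CliqueFreeOn S (k * (n / k + 1)) :=
    CliqueFreeOn.mono G (Nat.lt_mul_div_succ n (by omega)) hS
  have hSw : G.CliqueFreeOn S (w + 1) := CliqueFreeOn.mono G (by omega) hS
  rcases h.exists_cliqueFreeOn_subset hG hSw (n / k) k hSk with hle | ⟨A, -, hA, hχA⟩
  · calc chiSet G S ≤ 2 ^ (b * k) := hle
      _ ≤ w ^ b * 2 ^ (b * k) := Nat.le_mul_of_pos_left _ (by positivity)
      _ ≤ _ := Nat.le_self_pow (by omega) _
  · calc chiSet G S ≤ w ^ b * 2 ^ (b * k) * chiSet G A := hχA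
      _ ≤ w ^ b * 2 ^ (b * k) * (w ^ b * 2 ^ (b * k)) ^ (k.digits (n / k)).length := by
        gcongr
        exact ih _ (Nat.div_lt_self hn₀ hk) ((Nat.div_le_self n k).trans hn) hA
      _ = _ := by rw [hlen, pow_succ']

theorem chi_le_pow {w : ℕ} (hw : 2 ≤ w) (hcf : G.CliqueFree (w + 1)) :
    chi G ≤ w ^ (6 * b * Nat.log (Nat.log 2 w + 1) w) := by
  set k := Nat.log 2 w + 1
  have hlog : 1 ≤ Nat.log 2 w := Nat.log_pos one_lt_two hw
  have hkw : k ≤ w := calc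
    k ≤ 2 ^ Nat.log 2 w := Nat.lt_two_pow_self
    _ ≤ w := Nat.pow_log_le_self 2 (by omega)
  have hM : w ^ b * 2 ^ (b * k) ≤ w ^ (3 * b) := calc
    w ^ b * 2 ^ (b * k) = w ^ b * (2 * 2 ^ Nat.log 2 w) ^ b := by rw [mul_comm b, pow_mul]; ring
    _ ≤ w ^ b * (w * w) ^ b := by
      gcongr
      exact Nat.pow_log_le_self 2 (by omega)
    _ = w ^ (3 * b) := by ring
  have hlen : (k.digits w).length ≤ 2 * Nat.log k w := by
    rw [Nat.length_digits k w (by omega) (by omega)]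
    have := Nat.log_pos (by omega : 1 < k) hkw
    omega
  calc chi G = chiSet G Set.univ := (chiSet_univ G).symm
    _ ≤ (w ^ b * 2 ^ (b * k)) ^ (k.digits w).length :=
      h.chiSet_le_pow_length_digits hG (by omega) le_rfl ((cliqueFreeOn_univ G).2 hcf)
    _ ≤ (w ^ (3 * b)) ^ (2 * Nat.log k w) :=
      (Nat.pow_le_pow_left hM _).trans (Nat.pow_le_pow_right (by positivity) hlen)
    _ = w ^ (6 * b * Nat.log k w) := by rw [← pow_mul]; ring_nf

end HasCompletePairs

lemma natLog_log_succ_le_logb_div_logb_logb {w : ℕ} (hw : 3 ≤ w) :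
    (Nat.log (Nat.log 2 w + 1) w : ℝ) ≤ Real.logb 2 w / Real.logb 2 (Real.logb 2 w) := by
  set k := Nat.log 2 w + 1
  have hw₀ : (0 : ℝ) < w := by positivity
  have hlogw : 1 < Real.logb 2 w := by
    rw [Real.lt_logb_iff_rpow_lt one_lt_two hw₀, Real.rpow_one]
    exact_mod_cast (by omega : 2 < w)
  have hlogw_lt : Real.logb 2 w < k := by
    rw [Real.logb_lt_iff_lt_rpow one_lt_two hw₀, Real.rpow_natCast]
    exact_mod_cast Nat.lt_pow_succ_log_self one_lt_two w
  have hloglog : 0 < Real.logb 2 (Real.logb 2 w) := Real.logb_pos one_lt_two hlogw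
  calc (Nat.log k w : ℝ) ≤ Real.logb k w := Real.natLog_le_logb w k
    _ = Real.logb 2 w / Real.logb 2 k := by
      unfold Real.logb
      rw [div_div_div_cancel_right₀ (Real.log_pos one_lt_two).ne']
    _ ≤ Real.logb 2 w / Real.logb 2 (Real.logb 2 w) := by
      gcongr
      linarith

/-- Suppose there exists `b ≥ 4` such that every `P₅`-free graph `G` with
clique number `w ≥ 2` and `χ(G) ≥ 2` contains a complete pair `(A, B)` with
`χ(A) ≥ w^{−b}·χ(G)` and `χ(B) ≥ 2^{−b}·χ(G)`. Then there exists `d ≥ 1` such that every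
`P₅`-free graph with clique number at most `w ≥ 3` has
`χ(G) ≤ w^{d·log w / log log w}` (binary logarithms). -/
theorem stmt_17 (b : ℕ) (hb : 4 ≤ b)
    (hyp : ∀ (n : ℕ) (G : SimpleGraph (Fin n)) (w : ℕ), 2 ≤ w →
      ¬ G.CliqueFree w → G.CliqueFree (w + 1) → FreeOf G (pathGraph 5) →
      2 ≤ chi G →
      ∃ A B : Set (Fin n), Disjoint A B ∧ (∀ a ∈ A, ∀ c ∈ B, G.Adj a c) ∧
        (chi G : ℝ) ≤ (w : ℝ) ^ b * chiSet G A ∧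
        (chi G : ℝ) ≤ 2 ^ b * chiSet G B) :
    ∃ d : ℕ, 1 ≤ d ∧ ∀ (n : ℕ) (G : SimpleGraph (Fin n)) (w : ℕ), 3 ≤ w →
      FreeOf G (pathGraph 5) → G.CliqueFree (w + 1) →
      (chi G : ℝ) ≤
        (w : ℝ) ^ ((d : ℝ) * Real.logb 2 w / Real.logb 2 (Real.logb 2 w)) := by
  refine ⟨6 * b, by omega, fun n G w hw hfree hcf => ?_⟩
  have hw₁ : (1 : ℝ) ≤ w := by exact_mod_cast (by omega : 1 ≤ w)
  calc (chi G : ℝ) ≤ (w : ℝ) ^ (6 * b * Nat.log (Nat.log 2 w + 1) w) := by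
        exact_mod_cast HasCompletePairs.chi_le_pow hyp hfree (by omega) hcf
    _ = (w : ℝ) ^ ((6 * b : ℕ) * (Nat.log (Nat.log 2 w + 1) w : ℝ)) := by
        rw [← Nat.cast_mul, Real.rpow_natCast]
    _ ≤ (w : ℝ) ^ ((6 * b : ℕ) * Real.logb 2 w / Real.logb 2 (Real.logb 2 w)) := by
        rw [mul_div_assoc]
        gcongr
        exact natLog_log_succ_le_logb_div_logb_logb hw
end

section
/- Let G be a P5-free graph with clique number w ≥ 2 and suppose S = {u_1,…,u_t} ⊆ V(G) and for each i there exists z_i adjacent to every u_j with j ≠ i and nonadjacent to u_i. Then the stability number of G[S] is at most w; that is, any stable subset {u_i : i ∈ I} of S has |I| ≤ w. -/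
/-!
For any `i ∈ I`, the vertices `u i` and `z j` (`j ∈ I`, `j ≠ i`) form a clique of size `|I|`.
Indeed `u i` is adjacent to every such `z j`, and two of them, `z j` and `z k`, are adjacent
because otherwise `u j - z k - u i - z j - u k` would be an induced `P₅`.
-/

open SimpleGraph

namespace SimpleGraph

variable {V W : Type*} {G : SimpleGraph V}

theorem IsClique.card_le_of_cliqueFree {n : ℕ} {s : Finset V} (hs : G.IsClique (s : Set V))
    (hG : G.CliqueFree (n + 1)) : s.card ≤ n := by
  by_contra! hn
  obtain ⟨t, hts, ht⟩ := Finset.exists_subset_card_eq hn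
  exact hG t ⟨hs.subset hts, ht⟩

def Embedding.ofAdjIff {H : SimpleGraph W} (hH : ∀ i j, (∀ k, H.Adj i k ↔ H.Adj j k) → i = j)
    (f : W → V) (hf : ∀ i j, G.Adj (f i) (f j) ↔ H.Adj i j) : H ↪g G where
  toFun := f
  inj' i j hij := hH i j fun k => by rw [← hf, ← hf, hij]
  map_rel_iff' := hf _ _

theorem not_freeOf_pathGraph_five {a b c d e : V}
    (hab : G.Adj a b) (hbc : G.Adj b c) (hcd : G.Adj c d) (hde : G.Adj d e)
    (hac : ¬ G.Adj a c) (had : ¬ G.Adj a d) (hae : ¬ G.Adj a e)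
    (hbd : ¬ G.Adj b d) (hbe : ¬ G.Adj b e) (hce : ¬ G.Adj c e) :
    ¬ FreeOf G (pathGraph 5) := by
  refine fun hfree => hfree.false
    (Embedding.ofAdjIff (by simp only [pathGraph_adj]; decide) ![a, b, c, d, e] fun i j => ?_)
  fin_cases i <;> fin_cases j <;>
    simp [pathGraph_adj, G.adj_comm, hab, hbc, hcd, hde, hac, had, hae, hbd, hbe, hce]

section StableTransversal

variable {ι : Type*} {u z : ι → V} {I : Finset ι}

theorem adj_of_freeOf_pathGraph_five (hfree : FreeOf G (pathGraph 5))
    (hz : ∀ i j, i ≠ j → G.Adj (z i) (u j)) (hz' : ∀ i, ¬ G.Adj (z i) (u i))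
    (hstable : ∀ i ∈ I, ∀ j ∈ I, i ≠ j → ¬ G.Adj (u i) (u j)) {i j l : ι}
    (hi : i ∈ I) (hj : j ∈ I) (hl : l ∈ I) (hij : i ≠ j) (hli : l ≠ i) (hlj : l ≠ j) :
    G.Adj (z i) (z j) := by
  by_contra hzz
  exact not_freeOf_pathGraph_five (hz i j hij).symm (hz i l hli.symm) (hz j l hlj.symm).symm
    (hz j i hij.symm) (hstable j hj l hl hlj.symm) (fun h => hz' j h.symm)
    (hstable j hj i hi hij.symm) hzz (hz' i) (hstable l hl i hi hli) hfree

theorem isClique_insert_image_erase [DecidableEq ι] [DecidableEq V]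
    (hfree : FreeOf G (pathGraph 5))
    (hz : ∀ i j, i ≠ j → G.Adj (z i) (u j)) (hz' : ∀ i, ¬ G.Adj (z i) (u i))
    (hstable : ∀ i ∈ I, ∀ j ∈ I, i ≠ j → ¬ G.Adj (u i) (u j)) {i : ι} (hi : i ∈ I) :
    G.IsClique (↑(insert (u i) ((I.erase i).image z)) : Set V) := by
  rw [Finset.coe_insert, Finset.coe_image, isClique_insert]
  constructor
  · rintro _ ⟨j, hj, rfl⟩ _ ⟨k, hk, rfl⟩ hzz
    rw [Finset.mem_coe, Finset.mem_erase] at hj hk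
    exact adj_of_freeOf_pathGraph_five hfree hz hz' hstable hj.2 hk.2 hi
      (fun h => hzz (congrArg z h)) hj.1.symm hk.1.symm
  · rintro _ ⟨j, hj, rfl⟩ -
    exact (hz j i (Finset.mem_erase.1 hj).1).symm

theorem card_insert_image_erase [DecidableEq ι] [DecidableEq V]
    (hz : ∀ i j, i ≠ j → G.Adj (z i) (u j)) (hz' : ∀ i, ¬ G.Adj (z i) (u i))
    {i : ι} (hi : i ∈ I) :
    (insert (u i) ((I.erase i).image z)).card = I.card := by
  have hz_inj : Set.InjOn z (I.erase i) := fun j _ k _ hjk =>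
    by_contra fun hne => hz' k (hjk ▸ hz j k hne)
  have hui : u i ∉ (I.erase i).image z := by
    rw [Finset.mem_image]
    rintro ⟨j, hj, hzj⟩
    exact G.irrefl (hzj ▸ hz j i (Finset.mem_erase.1 hj).1)
  rw [Finset.card_insert_of_notMem hui, Finset.card_image_of_injOn hz_inj,
    Finset.card_erase_add_one hi]

end StableTransversal

end SimpleGraph

theorem stmt_18_general {V : Type*} (w : ℕ) (G : SimpleGraph V)
    (hfree : FreeOf G (pathGraph 5)) (hclique : G.CliqueFree (w + 1))
    (t : ℕ) (u : Fin t → V)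
    (z : Fin t → V)
    (hz : ∀ i j : Fin t, i ≠ j → G.Adj (z i) (u j))
    (hz' : ∀ i : Fin t, ¬ G.Adj (z i) (u i))
    (I : Finset (Fin t))
    (hstable : ∀ i ∈ I, ∀ j ∈ I, i ≠ j → ¬ G.Adj (u i) (u j)) :
    I.card ≤ w := by
  classical
  obtain rfl | ⟨i, hi⟩ := I.eq_empty_or_nonempty
  · exact Nat.zero_le w
  rw [← card_insert_image_erase hz hz' hi]
  exact (isClique_insert_image_erase hfree hz hz' hstable hi).card_le_of_cliqueFree hclique

/-- Let `G` be `P₅`-free with clique number `w ≥ 2`, let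
`S = {u₁, …, u_t}` be distinct vertices, and suppose for each `i` there is `z i`
adjacent to every `u j` with `j ≠ i` and nonadjacent to `u i`. Then every stable subset
`{u i : i ∈ I}` of `S` has `|I| ≤ w`. -/
theorem stmt_18 {V : Type*} [Fintype V] (w : ℕ) (hw : 2 ≤ w) (G : SimpleGraph V)
    (hfree : FreeOf G (pathGraph 5)) (hclique : G.CliqueFree (w + 1))
    (t : ℕ) (u : Fin t → V) (hu : Function.Injective u)
    (z : Fin t → V)
    (hz : ∀ i j : Fin t, i ≠ j → G.Adj (z i) (u j))
    (hz' : ∀ i : Fin t, ¬ G.Adj (z i) (u i))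
    (I : Finset (Fin t))
    (hstable : ∀ i ∈ I, ∀ j ∈ I, i ≠ j → ¬ G.Adj (u i) (u j)) :
    I.card ≤ w :=
  stmt_18_general w G hfree hclique t u z hz hz' I hstable
end
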